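/- arXiv:2602.00770 — 3 statements merged into one kernel-verified Lean document; each statement's English description precedes it below -/
import Mathlib

section
/- Entropy-bound inversion: for all reals a and c with 0 ≤ a ≤ 1, c ≥ 0, and binEntropy a ≥ log 2 − c (natural logarithm), one has a ≤ 1/2 + √(c/2). In particular, with c = (P/N)·log 2 for reals P ≥ 0 and N > 0, the conclusion reads a ≤ 1/2 + √((log 2 / 2) · (P/N)). -/
/-!
Binary Pinsker inequality: `g p = binEntropy p + 2 (p - 1/2)²` is symmetric about `1/2`, where it
equals `log 2`, and decreasing on `[1/2, 1]`, because there `-g' p = log (p / (1 - p)) - 2 (2p - 1)`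
and `2x ≤ log ((1 + x) / (1 - x))` for `0 ≤ x < 1` (the first term of the series of `artanh`).
Hence `binEntropy a ≥ log 2 - c` forces `2 (a - 1/2)² ≤ c`.
-/

open Real Set

lemma two_mul_le_log_one_add_div_one_sub {x : ℝ} (hx₀ : 0 ≤ x) (hx₁ : x < 1) :
    2 * x ≤ log ((1 + x) / (1 - x)) := by
  have partial_sum := sum_range_le_log_div hx₀ hx₁ 1
  norm_num at partial_sum
  linarith

lemma antitoneOn_binEntropy_add_two_mul_sq :
    AntitoneOn (fun p ↦ binEntropy p + 2 * (p - 2⁻¹) ^ 2) (Icc 2⁻¹ 1) := by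
  refine antitoneOn_of_hasDerivWithinAt_nonpos (convex_Icc _ _) (by fun_prop)
    (f' := fun p ↦ log (1 - p) - log p + 2 * (2 * (p - 2⁻¹))) (fun p hp ↦ ?_) (fun p hp ↦ ?_)
  all_goals rw [interior_Icc] at hp; obtain ⟨hp₀, hp₁⟩ := hp
  · have hsq : HasDerivAt (fun p : ℝ ↦ 2 * (p - 2⁻¹) ^ 2) (2 * (2 * (p - 2⁻¹))) p := by
      simpa using (((hasDerivAt_id p).sub_const 2⁻¹).pow 2).const_mul 2
    exact ((hasDerivAt_binEntropy (by linarith) hp₁.ne).add hsq).hasDerivWithinAt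
  · have key := two_mul_le_log_one_add_div_one_sub (x := 2 * p - 1) (by linarith) (by linarith)
    rw [show 1 + (2 * p - 1) = 2 * p by ring, show 1 - (2 * p - 1) = 2 * (1 - p) by ring,
      mul_div_mul_left _ _ two_ne_zero, log_div (by linarith) (by linarith)] at key
    linarith

theorem binEntropy_add_two_mul_sq_le_log_two {p : ℝ} (hp₀ : 0 ≤ p) (hp₁ : p ≤ 1) :
    binEntropy p + 2 * (p - 2⁻¹) ^ 2 ≤ log 2 := by
  wlog hp : 2⁻¹ ≤ p generalizing p
  · have := this (p := 1 - p) (by linarith) (by linarith) (by linarith)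
    rw [binEntropy_one_sub] at this
    linarith
  simpa using antitoneOn_binEntropy_add_two_mul_sq ⟨le_rfl, by norm_num⟩ ⟨hp, hp₁⟩ hp

theorem entropy_bound_inversion_general (a c : ℝ) (ha0 : 0 ≤ a) (ha1 : a ≤ 1)
    (h : Real.binEntropy a ≥ Real.log 2 - c) :
    a ≤ 1/2 + Real.sqrt (c / 2) := by
  have pinsker := binEntropy_add_two_mul_sq_le_log_two ha0 ha1
  have hdev : |a - 2⁻¹| ≤ √(c / 2) := abs_le_sqrt (by linarith)
  linarith [le_abs_self (a - 2⁻¹)]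

/-- Entropy-bound inversion: if `binEntropy a ≥ log 2 − c` with `0 ≤ a ≤ 1` and `c ≥ 0`,
then `a ≤ 1/2 + √(c/2)`. -/
theorem entropy_bound_inversion (a c : ℝ) (ha0 : 0 ≤ a) (ha1 : a ≤ 1) (hc : 0 ≤ c)
    (h : Real.binEntropy a ≥ Real.log 2 - c) :
    a ≤ 1/2 + Real.sqrt (c / 2) :=
  entropy_bound_inversion_general a c ha0 ha1 h
end

section
/- Analytic core of Proposition 1 (Capacity-Constrained Accuracy Bound): let N ≥ 1 be a natural number, P_eff ≥ 0 a real number, and p : Fin N → ℝ a family of marginal error probabilities with 0 ≤ p i ≤ 1 for all i, satisfying the Fano-type constraint N · log 2 − P_eff · log 2 ≤ ∑_{i} binEntropy (p i) (i.e., in bits, N − P_eff ≤ ∑_i h₂(P_{e,i})). Then the expected accuracy A := 1 − (1/N) · ∑_{i} p i satisfies A ≤ 1/2 + √((log 2 / 2) · (P_eff / N)). -/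
/-!
Since `binEntropy x + 2 (x - 1/2)²` is concave on `[0, 1]` (its second derivative is
`4 - 1 / (x (1 - x)) ≤ 0`) and symmetric under `x ↦ 1 - x`, it is maximal at `1/2`, which gives the
binary Pinsker bound `binEntropy q ≤ log 2 - 2 (q - 1/2)²`. By Jensen, `∑ binEntropy (p i)` is at
most `N · binEntropy q` for the mean error `q`, so the Fano constraint forces
`2 N (q - 1/2)² ≤ P_eff log 2`, i.e. the accuracy `1 - q` exceeds `1/2` by at most
`√((log 2 / 2) (P_eff / N))`.
-/

open Real Set

lemma concaveOn_binEntropy_add_two_mul_sq :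
    ConcaveOn ℝ (Icc 0 1) fun x => binEntropy x + 2 * (x - 1 / 2) ^ 2 := by
  refine concaveOn_of_hasDerivWithinAt2_nonpos (convex_Icc 0 1) (by fun_prop)
    (f' := fun x => log (1 - x) - log x + 4 * (x - 1 / 2))
    (f'' := fun x => 4 - (1 - x)⁻¹ - x⁻¹) (fun x hx => ?_) (fun x hx => ?_) (fun x hx => ?_) <;>
    rw [interior_Icc] at hx <;> obtain ⟨hx₀, hx₁⟩ := hx
  · have hsq : HasDerivAt (fun y : ℝ => 2 * (y - 1 / 2) ^ 2) (4 * (x - 1 / 2)) x :=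
      ((((hasDerivAt_id' x).sub_const (1 / 2)).pow 2).const_mul 2).congr_deriv (by push_cast; ring)
    exact ((hasDerivAt_binEntropy hx₀.ne' hx₁.ne).fun_add hsq).hasDerivWithinAt
  · have hlog : HasDerivAt (fun y : ℝ => log (1 - y)) (-(1 - x)⁻¹) x :=
      (((hasDerivAt_id' x).const_sub 1).log (by linarith)).congr_deriv (by ring)
    have hlin : HasDerivAt (fun y : ℝ => 4 * (y - 1 / 2)) 4 x :=
      (((hasDerivAt_id' x).sub_const (1 / 2)).const_mul 4).congr_deriv (by ring)
    exact ((hlog.fun_sub (hasDerivAt_log hx₀.ne')).fun_add hlin).hasDerivWithinAt.congr_deriv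
      (by ring)
  · have h₁x : 0 < 1 - x := by linarith
    rw [sub_sub, inv_add_inv h₁x.ne' hx₀.ne', sub_nonpos, le_div_iff₀ (by positivity)]
    nlinarith [sq_nonneg (2 * x - 1)]

lemma binEntropy_le_log_two_sub_two_mul_sq {p : ℝ} (hp₀ : 0 ≤ p) (hp₁ : p ≤ 1) :
    binEntropy p ≤ log 2 - 2 * (p - 1 / 2) ^ 2 := by
  have hmid := concaveOn_binEntropy_add_two_mul_sq.2 (show p ∈ Icc 0 1 from ⟨hp₀, hp₁⟩)
    (show 1 - p ∈ Icc 0 1 from ⟨by linarith, by linarith⟩)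
    (show (0 : ℝ) ≤ 1 / 2 by norm_num) (show (0 : ℝ) ≤ 1 / 2 by norm_num) (by norm_num)
  simp only [smul_eq_mul, binEntropy_one_sub] at hmid
  rw [show 1 / 2 * p + 1 / 2 * (1 - p) = (2⁻¹ : ℝ) by ring, binEntropy_two_inv] at hmid
  nlinarith

section Mean

variable {ι : Type*} [Fintype ι] [Nonempty ι] {s : Set ℝ} {p : ι → ℝ}

lemma Convex.inv_card_mul_sum_mem (hs : Convex ℝ s) (hp : ∀ i, p i ∈ s) :
    (Fintype.card ι : ℝ)⁻¹ * ∑ i, p i ∈ s := by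
  have hcard : (0 : ℝ) < Fintype.card ι := by exact_mod_cast Fintype.card_pos
  simpa [Finset.mul_sum] using hs.sum_mem (t := Finset.univ) (w := fun _ => (Fintype.card ι : ℝ)⁻¹)
    (fun _ _ => by positivity) (by simp [hcard.ne']) (fun i _ => hp i)

lemma ConcaveOn.sum_le_card_mul_map_inv_card_mul_sum {f : ℝ → ℝ} (hf : ConcaveOn ℝ s f)
    (hp : ∀ i, p i ∈ s) :
    ∑ i, f (p i) ≤ Fintype.card ι * f ((Fintype.card ι : ℝ)⁻¹ * ∑ i, p i) := by
  have hcard : (0 : ℝ) < Fintype.card ι := by exact_mod_cast Fintype.card_pos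
  have hjensen := hf.le_map_sum (t := Finset.univ) (w := fun _ => (Fintype.card ι : ℝ)⁻¹)
    (fun _ _ => by positivity) (by simp [hcard.ne']) (fun i _ => hp i)
  simp only [smul_eq_mul, ← Finset.mul_sum] at hjensen
  rwa [inv_mul_le_iff₀ hcard] at hjensen

end Mean

theorem capacity_constrained_accuracy_bound_general (N : ℕ) (hN : 1 ≤ N) (Peff : ℝ)
    (p : Fin N → ℝ) (hp : ∀ i, 0 ≤ p i ∧ p i ≤ 1)
    (hFano : (N : ℝ) * Real.log 2 - Peff * Real.log 2 ≤ ∑ i, Real.binEntropy (p i)) :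
    1 - (1 / (N : ℝ)) * ∑ i, p i
      ≤ 1/2 + Real.sqrt ((Real.log 2 / 2) * (Peff / (N : ℝ))) := by
  have : Nonempty (Fin N) := ⟨⟨0, hN⟩⟩
  have hN₀ : (0 : ℝ) < N := by exact_mod_cast hN
  have hp' : ∀ i, p i ∈ Icc 0 1 := hp
  set q := 1 / (N : ℝ) * ∑ i, p i
  obtain ⟨hq₀, hq₁⟩ : q ∈ Icc 0 1 := by
    simpa [q] using (convex_Icc (0 : ℝ) 1).inv_card_mul_sum_mem hp'
  have hsq : (q - 1 / 2) ^ 2 ≤ log 2 / 2 * (Peff / N) := by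
    have hchain := calc
      N * log 2 - Peff * log 2 ≤ ∑ i, binEntropy (p i) := hFano
      _ ≤ N * binEntropy q := by
        simpa [q] using strictConcave_binEntropy.concaveOn.sum_le_card_mul_map_inv_card_mul_sum hp'
      _ ≤ N * (log 2 - 2 * (q - 1 / 2) ^ 2) := by
        gcongr
        exact binEntropy_le_log_two_sub_two_mul_sq hq₀ hq₁
    rw [div_mul_div_comm, le_div_iff₀ (by positivity)]
    linarith
  linarith [abs_le_sqrt hsq, neg_abs_le (q - 1 / 2)]

/-- Analytic core of Proposition 1 (Capacity-Constrained Accuracy Bound). -/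
theorem capacity_constrained_accuracy_bound (N : ℕ) (hN : 1 ≤ N) (Peff : ℝ)
    (hP : 0 ≤ Peff) (p : Fin N → ℝ) (hp : ∀ i, 0 ≤ p i ∧ p i ≤ 1)
    (hFano : (N : ℝ) * Real.log 2 - Peff * Real.log 2 ≤ ∑ i, Real.binEntropy (p i)) :
    1 - (1 / (N : ℝ)) * ∑ i, p i
      ≤ 1/2 + Real.sqrt ((Real.log 2 / 2) * (Peff / (N : ℝ))) :=
  capacity_constrained_accuracy_bound_general N hN Peff p hp hFano
end

section
/- Fano's inequality for binary variables: let q : Bool × Bool → ℝ be a probability mass function (q ≥ 0 and ∑_{(y,ŷ)} q(y,ŷ) = 1), let q₂(ŷ) = ∑_y q(y,ŷ) be the marginal of the second coordinate, and let P_e = q(false,true) + q(true,false) be the mismatch probability. Then the conditional entropy H(Y | Ŷ) := ∑_{ŷ} ∑_{y} negMulLog(q(y,ŷ)) − ∑_{ŷ} negMulLog(q₂(ŷ)) satisfies H(Y | Ŷ) ≤ binEntropy P_e (all entropies in nats, natural logarithm). -/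
lemma fano_key (p r s : ℝ) (hp : 0 ≤ p) (hr : p ≤ r) (hs : p ≤ s) :
    Real.negMulLog p + p * (Real.log r + Real.log s) ≤ r * s - p := by
  rcases eq_or_lt_of_le hp with h | h
  · simp [← h, Real.negMulLog]
    exact mul_nonneg (hp.trans hr) (hp.trans hs)
  · have hr0 : 0 < r := lt_of_lt_of_le h hr
    have hs0 : 0 < s := lt_of_lt_of_le h hs
    have hx : 0 < r * s / p := by positivity
    have hlog : Real.log (r * s / p) ≤ r * s / p - 1 := Real.log_le_sub_one_of_pos hx
    have heq : Real.negMulLog p + p * (Real.log r + Real.log s)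
        = p * Real.log (r * s / p) := by
      rw [Real.log_div (by positivity) h.ne', Real.log_mul hr0.ne' hs0.ne',
        Real.negMulLog]
      ring
    rw [heq]
    calc p * Real.log (r * s / p) ≤ p * (r * s / p - 1) :=
          mul_le_mul_of_nonneg_left hlog hp
      _ = r * s - p := by field_simp

/-- Fano's inequality for binary variables: the conditional entropy `H(Y | Ŷ)` of a joint
pmf `q` on `Bool × Bool` is at most the binary entropy of the mismatch probability. -/
theorem binary_fano (q : Bool × Bool → ℝ) (hq : ∀ x, 0 ≤ q x)
    (hsum : ∑ x : Bool × Bool, q x = 1) :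
    (∑ yhat : Bool, ∑ y : Bool, Real.negMulLog (q (y, yhat)))
        - (∑ yhat : Bool, Real.negMulLog (∑ y : Bool, q (y, yhat)))
      ≤ Real.binEntropy (q (false, true) + q (true, false)) := by
  set a := q (false, false) with ha
  set b := q (true, false) with hb
  set c := q (false, true) with hc
  set d := q (true, true) with hd
  have ha0 : 0 ≤ a := hq _
  have hb0 : 0 ≤ b := hq _
  have hc0 : 0 ≤ c := hq _
  have hd0 : 0 ≤ d := hq _
  have hsum' : a + b + c + d = 1 := by
    rw [Fintype.sum_prod_type] at hsum
    simp [Fintype.sum_bool] at hsum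
    linarith
  have h1 := fano_key a (a + b) (a + d) ha0 (by linarith) (by linarith)
  have h2 := fano_key b (a + b) (c + b) hb0 (by linarith) (by linarith)
  have h3 := fano_key c (c + d) (c + b) hc0 (by linarith) (by linarith)
  have h4 := fano_key d (c + d) (a + d) hd0 (by linarith) (by linarith)
  have hmain : Real.negMulLog a + Real.negMulLog b + Real.negMulLog c + Real.negMulLog d
      ≤ Real.negMulLog (a + b) + Real.negMulLog (c + d)
        + Real.negMulLog (c + b) + Real.negMulLog (a + d) := by
    have hgroup : a * (Real.log (a+b) + Real.log (a+d))
        + b * (Real.log (a+b) + Real.log (c+b))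
        + c * (Real.log (c+d) + Real.log (c+b))
        + d * (Real.log (c+d) + Real.log (a+d))
        = -(Real.negMulLog (a+b) + Real.negMulLog (c+d)
            + Real.negMulLog (c+b) + Real.negMulLog (a+d)) := by
      simp only [Real.negMulLog]
      ring
    have hrs : (a+b)*(a+d) + (a+b)*(c+b) + (c+d)*(c+b) + (c+d)*(a+d)
        - a - b - c - d = 0 := by nlinarith [hsum']
    nlinarith [h1, h2, h3, h4, hgroup, hrs]
  rw [Real.binEntropy_eq_negMulLog_add_negMulLog_one_sub]
  have h1mc : 1 - (c + b) = a + d := by linarith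
  simp only [Fintype.sum_bool, ← ha, ← hb, ← hc, ← hd, h1mc]
  rw [show d + c = c + d from add_comm d c, show b + a = a + b from add_comm b a]
  linarith [hmain]
end
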